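/- arXiv:2507.22449 — 3 statements merged into one kernel-verified Lean document; each statement's English description precedes it below -/
import Mathlib

section
/- Discrete Gronwall lemma in difference form: Let M ∈ ℕ, τ > 0, and λ ∈ ℝ with λ ≠ 0 and 1 − λτ > 0. Let a : {0, 1, …, M} → ℝ and g : {1, …, M} → ℝ, and let G ≥ 0 satisfy |g(m)| ≤ G for all m ∈ {1, …, M}. If (a(m) − a(m−1))/τ ≤ λ·a(m) + g(m) for all m ∈ {1, …, M}, then for every m ∈ {1, …, M} one has a(m) ≤ (1 − λτ)^{−m}·a(0) + ((1 − λτ)^{−m} − 1)·G/λ. -/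
/-!
The difference inequality rearranges to `(1 - λτ) a(m) ≤ a(m-1) + τG`. The right-hand side of
the claim is the exact solution `b` of `(1 - λτ) b(m) = b(m-1) + τG` with `b(0) = a(0)`, and
since `1 - λτ > 0` the comparison `a(m-1) ≤ b(m-1)` propagates to `a(m) ≤ b(m)`.
-/

section Comparison

variable {α : Type*} [Field α] [LinearOrder α] [IsStrictOrderedRing α]

theorem le_of_mul_succ_le_of_mul_succ_eq {r c : α} (hr : 0 < r) {M : ℕ} {a b : ℕ → α}
    (ha : ∀ n < M, r * a (n + 1) ≤ a n + c) (hb : ∀ n, r * b (n + 1) = b n + c)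
    (h0 : a 0 ≤ b 0) : ∀ n ≤ M, a n ≤ b n := by
  intro n
  induction n with
  | zero => exact fun _ => h0
  | succ n ih =>
    intro hn
    refine le_of_mul_le_mul_left ?_ hr
    calc r * a (n + 1) ≤ a n + c := ha n hn
      _ ≤ b n + c := by gcongr; exact ih (by omega)
      _ = r * b (n + 1) := (hb n).symm

theorem mul_inv_pow_succ_affine {r : α} (hr : r ≠ 0) (x C : α) (n : ℕ) :
    r * ((r ^ (n + 1))⁻¹ * x + ((r ^ (n + 1))⁻¹ - 1) * C) =
      (r ^ n)⁻¹ * x + ((r ^ n)⁻¹ - 1) * C + (1 - r) * C := by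
  have hrn : r ^ n ≠ 0 := pow_ne_zero n hr
  field_simp
  ring

theorem mul_le_of_div_sub_le {τ lam x y g G : α} (hτ : 0 < τ) (hgG : g ≤ G)
    (h : (x - y) / τ ≤ lam * x + g) : (1 - lam * τ) * x ≤ y + τ * G := by
  have h' : x - y ≤ τ * (lam * x + g) := (div_le_iff₀' hτ).mp h
  nlinarith

end Comparison

theorem discrete_gronwall_difference_form_general (M : ℕ) (τ lam : ℝ) (hτ : 0 < τ)
    (hlam : lam ≠ 0) (hone : 0 < 1 - lam * τ)
    (a : ℕ → ℝ) (g : ℕ → ℝ) (G : ℝ)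
    (hg : ∀ m : ℕ, 1 ≤ m → m ≤ M → |g m| ≤ G)
    (hdiff : ∀ m : ℕ, 1 ≤ m → m ≤ M → (a m - a (m - 1)) / τ ≤ lam * a m + g m) :
    ∀ m : ℕ, 1 ≤ m → m ≤ M →
      a m ≤ ((1 - lam * τ) ^ m)⁻¹ * a 0 + (((1 - lam * τ) ^ m)⁻¹ - 1) * G / lam := by
  set r := 1 - lam * τ with hr
  have hstep : ∀ n < M, r * a (n + 1) ≤ a n + τ * G := fun n hn =>
    mul_le_of_div_sub_le hτ (abs_le.mp (hg (n + 1) (by omega) hn)).2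
      (hdiff (n + 1) (by omega) hn)
  have hclosed : ∀ n, r * ((r ^ (n + 1))⁻¹ * a 0 + ((r ^ (n + 1))⁻¹ - 1) * (G / lam)) =
      (r ^ n)⁻¹ * a 0 + ((r ^ n)⁻¹ - 1) * (G / lam) + τ * G := fun n => by
    rw [mul_inv_pow_succ_affine hone.ne' (a 0) (G / lam) n, hr]
    field_simp
    ring
  intro m _ hmM
  simpa only [mul_div_assoc] using
    le_of_mul_succ_le_of_mul_succ_eq (b := fun n => (r ^ n)⁻¹ * a 0 + ((r ^ n)⁻¹ - 1) * (G / lam))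
      hone hstep hclosed (by simp) m hmM

/-- **Discrete Gronwall lemma in difference form.** If `(a m - a (m-1))/τ ≤ λ·a m + g m`
for `m = 1, …, M`, with `1 - λτ > 0`, `λ ≠ 0`, and `|g m| ≤ G`, then
`a m ≤ (1 - λτ)⁻ᵐ·a 0 + ((1 - λτ)⁻ᵐ - 1)·G/λ` for every `m = 1, …, M`. -/
theorem discrete_gronwall_difference_form (M : ℕ) (τ lam : ℝ) (hτ : 0 < τ)
    (hlam : lam ≠ 0) (hone : 0 < 1 - lam * τ)
    (a : ℕ → ℝ) (g : ℕ → ℝ) (G : ℝ) (hG : 0 ≤ G)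
    (hg : ∀ m : ℕ, 1 ≤ m → m ≤ M → |g m| ≤ G)
    (hdiff : ∀ m : ℕ, 1 ≤ m → m ≤ M → (a m - a (m - 1)) / τ ≤ lam * a m + g m) :
    ∀ m : ℕ, 1 ≤ m → m ≤ M →
      a m ≤ ((1 - lam * τ) ^ m)⁻¹ * a 0 + (((1 - lam * τ) ^ m)⁻¹ - 1) * G / lam :=
  discrete_gronwall_difference_form_general M τ lam hτ hlam hone a g G hg hdiff
end

section
/- (Unique solvability of the matching condition in the non-even case) Let r > 0, ζ ∈ (−r, r), and p₁, p₂ ∈ (1, ∞) with Hölder conjugates p₁' = p₁/(p₁−1) and p₂' = p₂/(p₂−1). Then there exists exactly one a ∈ ℝ such that −(1/p₁')·|ζ − a|^{p₁'} + (1/p₁')·|r + a|^{p₁'} = −(1/p₂')·|ζ − a|^{p₂'} + (1/p₂')·|r − a|^{p₂'}. -/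
/-! With `qᵢ = pᵢ'`, the difference of the two sides is `G₁ a / q₁ + G₂ a / q₂`, where
`G₁ a = |a + r|^q₁ - |a - ζ|^q₁` and `G₂ a = |a - ζ|^q₂ - |a - r|^q₂`. Since `|x|^q` is strictly
convex for `q > 1`, every `a ↦ |a - u|^q - |a - v|^q` with `u < v` is strictly increasing, and it
vanishes at `(u + v) / 2`. So the difference is continuous and strictly increasing, negative at
`(ζ - r) / 2` and positive at `(ζ + r) / 2`, and has exactly one zero. -/

open Real Set

theorem strictConvexOn_abs_rpow {q : ℝ} (hq : 1 < q) :
    StrictConvexOn ℝ univ fun x : ℝ ↦ |x| ^ q := by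
  refine ⟨convex_univ, fun x _ y _ hxy a b ha hb hab ↦ ?_⟩
  simp only [smul_eq_mul]
  have htri : |a * x + b * y| ≤ a * |x| + b * |y| := by
    simpa [abs_mul, abs_of_pos ha, abs_of_pos hb] using abs_add_le (a * x) (b * y)
  have hconv := (convexOn_rpow hq.le).2 (abs_nonneg x) (abs_nonneg y) ha.le hb.le hab
  simp only [smul_eq_mul] at hconv
  rcases eq_or_ne |x| |y| with hxy' | hxy'
  · -- `|x| = |y|` with `x ≠ y` forces `y = -x ≠ 0`, and then the triangle inequality is strict.
    obtain rfl : y = -x := neg_eq_iff_eq_neg.1 ((abs_eq_abs.1 hxy').resolve_left hxy).symm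
    have hx : 0 < |x| := abs_pos.2 fun h ↦ hxy (by simp [h])
    have hlt : |a * x + b * -x| < a * |x| + b * |-x| := by
      have : |a - b| < 1 := abs_lt.2 ⟨by linarith, by linarith⟩
      rw [abs_neg, ← add_mul, hab, one_mul, show a * x + b * -x = (a - b) * x by ring, abs_mul]
      nlinarith
    exact (rpow_lt_rpow (abs_nonneg _) hlt (by linarith)).trans_le hconv
  · exact (rpow_le_rpow (abs_nonneg _) htri (by linarith)).trans_lt
      (by simpa using (strictConvexOn_rpow hq).2 (abs_nonneg x) (abs_nonneg y) hxy' ha hb hab)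

theorem StrictConvexOn.strictMono_sub_add {f : ℝ → ℝ} (hf : StrictConvexOn ℝ univ f) {h : ℝ}
    (hh : 0 < h) : StrictMono fun x ↦ f (x + h) - f x := by
  intro x y hxy
  -- Compare both secants with the secant over `[x, y + h]`.
  have h₁ := hf.secant_strict_mono (mem_univ x) (mem_univ (x + h)) (mem_univ (y + h))
    (by linarith) (by linarith) (by linarith)
  have h₂ := hf.secant_strict_mono (mem_univ (y + h)) (mem_univ x) (mem_univ y)
    (by linarith) (by linarith) hxy
  rw [← neg_div_neg_eq, neg_sub, neg_sub, ← neg_div_neg_eq (f y - _), neg_sub, neg_sub,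
    add_sub_cancel_left] at h₂
  rw [add_sub_cancel_left] at h₁
  exact (div_lt_div_iff_of_pos_right hh).1 (h₁.trans h₂)

theorem strictMono_abs_sub_rpow_sub {q u v : ℝ} (hq : 1 < q) (huv : u < v) :
    StrictMono fun a : ℝ ↦ |a - u| ^ q - |a - v| ^ q := by
  have := (strictConvexOn_abs_rpow hq).strictMono_sub_add (sub_pos.2 huv)
  simpa only [Function.comp_def, id, ← sub_eq_add_neg, sub_add_sub_cancel] using
    this.comp (strictMono_id.add_const (-v))

theorem StrictMono.existsUnique_eq_zero {f : ℝ → ℝ} (hmono : StrictMono f) (hcont : Continuous f)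
    {x y : ℝ} (hx : f x < 0) (hy : 0 < f y) : ∃! a, f a = 0 := by
  obtain ⟨a, -, ha⟩ := intermediate_value_Icc (hmono.lt_iff_lt.1 (hx.trans hy)).le
    hcont.continuousOn ⟨hx.le, hy.le⟩
  exact ⟨a, ha, fun b hb ↦ hmono.injective (hb.trans ha.symm)⟩

theorem abs_sub_rpow_sub_abs_sub_rpow_midpoint (q u v : ℝ) :
    |(u + v) / 2 - u| ^ q - |(u + v) / 2 - v| ^ q = 0 := by
  rw [sub_eq_zero, ← abs_neg, show -((u + v) / 2 - u) = (u + v) / 2 - v by ring]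

theorem existsUnique_abs_sub_rpow_sub_add_abs_sub_rpow_sub_eq_zero {q₁ q₂ c₁ c₂ u w v : ℝ}
    (hq₁ : 1 < q₁) (hq₂ : 1 < q₂) (hc₁ : 0 < c₁) (hc₂ : 0 < c₂) (huw : u < w) (hwv : w < v) :
    ∃! a : ℝ, c₁ * (|a - u| ^ q₁ - |a - w| ^ q₁) + c₂ * (|a - w| ^ q₂ - |a - v| ^ q₂) = 0 := by
  set G₁ := fun a : ℝ ↦ |a - u| ^ q₁ - |a - w| ^ q₁
  set G₂ := fun a : ℝ ↦ |a - w| ^ q₂ - |a - v| ^ q₂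
  have hG₁ : StrictMono G₁ := strictMono_abs_sub_rpow_sub hq₁ huw
  have hG₂ : StrictMono G₂ := strictMono_abs_sub_rpow_sub hq₂ hwv
  have hcont : Continuous fun a ↦ c₁ * G₁ a + c₂ * G₂ a := by
    simp only [G₁, G₂]
    fun_prop (disch := linarith)
  have hm : (u + w) / 2 < (w + v) / 2 := by linarith
  have h₁ : G₁ ((u + w) / 2) = 0 := abs_sub_rpow_sub_abs_sub_rpow_midpoint q₁ u w
  have h₂ : G₂ ((w + v) / 2) = 0 := abs_sub_rpow_sub_abs_sub_rpow_midpoint q₂ w v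
  have hneg : c₁ * G₁ ((u + w) / 2) + c₂ * G₂ ((u + w) / 2) < 0 := by
    nlinarith [hG₂ hm]
  have hpos : 0 < c₁ * G₁ ((w + v) / 2) + c₂ * G₂ ((w + v) / 2) := by
    nlinarith [hG₁ hm]
  exact ((hG₁.const_mul hc₁).add (hG₂.const_mul hc₂)).existsUnique_eq_zero hcont hneg hpos

theorem matching_condition_unique_solvability_general (r ζ p₁ p₂ : ℝ)
    (hζ : ζ ∈ Set.Ioo (-r) r) (hp₁ : 1 < p₁) (hp₂ : 1 < p₂) :
    ∃! a : ℝ,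
      -(1 / (p₁ / (p₁ - 1))) * |ζ - a| ^ (p₁ / (p₁ - 1))
          + 1 / (p₁ / (p₁ - 1)) * |r + a| ^ (p₁ / (p₁ - 1))
        = -(1 / (p₂ / (p₂ - 1))) * |ζ - a| ^ (p₂ / (p₂ - 1))
          + 1 / (p₂ / (p₂ - 1)) * |r - a| ^ (p₂ / (p₂ - 1)) := by
  set q₁ := p₁ / (p₁ - 1)
  set q₂ := p₂ / (p₂ - 1)
  have hq₁ : 1 < q₁ := (one_lt_div (by linarith)).2 (by linarith)
  have hq₂ : 1 < q₂ := (one_lt_div (by linarith)).2 (by linarith)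
  refine (existsUnique_congr fun a ↦ ?_).2 <|
    existsUnique_abs_sub_rpow_sub_add_abs_sub_rpow_sub_eq_zero (c₁ := 1 / q₁) (c₂ := 1 / q₂)
      hq₁ hq₂ (by positivity) (by positivity) hζ.1 hζ.2
  rw [abs_sub_comm ζ, abs_sub_comm r, sub_neg_eq_add, add_comm a, ← sub_eq_zero]
  constructor <;> intro h <;> linarith

/-- **Unique solvability of the matching condition in the non-even case.** Let `r > 0`,
`ζ ∈ (−r, r)`, and `p₁, p₂ ∈ (1, ∞)` with conjugates `p₁' = p₁/(p₁−1)`,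
`p₂' = p₂/(p₂−1)`. Then there is exactly one `a ∈ ℝ` with
`−(1/p₁')·|ζ − a|^{p₁'} + (1/p₁')·|r + a|^{p₁'}
  = −(1/p₂')·|ζ − a|^{p₂'} + (1/p₂')·|r − a|^{p₂'}`. -/
theorem matching_condition_unique_solvability (r ζ p₁ p₂ : ℝ) (hr : 0 < r)
    (hζ : ζ ∈ Set.Ioo (-r) r) (hp₁ : 1 < p₁) (hp₂ : 1 < p₂) :
    ∃! a : ℝ,
      -(1 / (p₁ / (p₁ - 1))) * |ζ - a| ^ (p₁ / (p₁ - 1))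
          + 1 / (p₁ / (p₁ - 1)) * |r + a| ^ (p₁ / (p₁ - 1))
        = -(1 / (p₂ / (p₂ - 1))) * |ζ - a| ^ (p₂ / (p₂ - 1))
          + 1 / (p₂ / (p₂ - 1)) * |r - a| ^ (p₂ / (p₂ - 1)) :=
  matching_condition_unique_solvability_general r ζ p₁ p₂ hζ hp₁ hp₂
end

section
/- (Explicit solution for a piecewise constant non-even exponent) Let r > 0, ζ ∈ (−r, r), and p₁, p₂ ∈ (1, ∞) with Hölder conjugates p₁' = p₁/(p₁−1) and p₂' = p₂/(p₂−1), and let a ∈ ℝ satisfy the matching condition −(1/p₁')·|ζ − a|^{p₁'} + (1/p₁')·|r + a|^{p₁'} = −(1/p₂')·|ζ − a|^{p₂'} + (1/p₂')·|r − a|^{p₂'}. Set b₁ := (1/p₁')·|r + a|^{p₁'} and b₂ := (1/p₂')·|r − a|^{p₂'}, and define v : [−r, r] → ℝ by v(x) := −(1/p₁')·|a − x|^{p₁'} + b₁ for x ∈ [−r, ζ] and v(x) := −(1/p₂')·|a − x|^{p₂'} + b₂ for x ∈ [ζ, r]. Then: (i) the two formulas agree at x = ζ, so v is well defined and continuous on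 [−r, r]; (ii) v(−r) = v(r) = 0; (iii) for every x ∈ (−r, ζ), v is differentiable at x with |v'(x)|^{p₁−2}·v'(x) = a − x, and for every x ∈ (ζ, r), v is differentiable at x with |v'(x)|^{p₂−2}·v'(x) = a − x. In particular, the flux x ↦ |v'(x)|^{p(x)−2}·v'(x) agrees away from x = ζ with the continuous function x ↦ a − x, whose derivative is −1, so v solves −(|v'|^{p(·)−2}v')' = 1 on (−r, r) away from ζ, with zero boundary values, for the exponent p(x) := p₁ for x < ζ and p(x) := p₂ for x > ζ. -/
/-!
On each piece `v` is, up to a constant, `x ↦ -|a - x|^{q}/q`, whose derivative is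
`|a - x|^{q-2}(a - x)`. Since `p` and `q` are Hölder conjugate, `t ↦ |t|^{p-2} t` and
`t ↦ |t|^{q-2} t` are mutually inverse (the exponents satisfy `(p - 1)(q - 1) = 1`), so the flux
`|v'|^{p-2} v'` is exactly `a - x`.
-/

open Real Set

noncomputable section

def pFlux (p t : ℝ) : ℝ := |t| ^ (p - 2) * t

lemma abs_pFlux (p : ℝ) {t : ℝ} (ht : t ≠ 0) : |pFlux p t| = |t| ^ (p - 1) := by
  rw [pFlux, abs_mul, abs_of_nonneg (rpow_nonneg (abs_nonneg t) _),
    ← rpow_add_one (abs_ne_zero.mpr ht)]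
  ring_nf

lemma Real.HolderConjugate.pFlux_pFlux {p q : ℝ} (h : p.HolderConjugate q) (t : ℝ) :
    pFlux p (pFlux q t) = t := by
  rcases eq_or_ne t 0 with rfl | ht
  · simp [pFlux]
  have hexp : (q - 1) * (p - 2) + (q - 2) = 0 := by linear_combination h.mul_eq_add
  have ht' : 0 < |t| := abs_pos.mpr ht
  calc pFlux p (pFlux q t)
      = |t| ^ ((q - 1) * (p - 2)) * |t| ^ (q - 2) * t := by
        rw [pFlux, abs_pFlux q ht, ← rpow_mul ht'.le, pFlux, mul_assoc]
    _ = t := by rw [← rpow_add ht', hexp, rpow_zero, one_mul]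

lemma hasDerivAt_neg_abs_sub_rpow_div_add {q : ℝ} (hq : 1 < q) (a b x : ℝ) :
    HasDerivAt (fun y => -(1 / q) * |a - y| ^ q + b) (pFlux q (a - x)) x := by
  have h := (((hasDerivAt_abs_rpow (a - x) hq).comp x
    ((hasDerivAt_id x).const_sub a)).const_mul (-(1 / q))).add_const b
  refine h.congr_deriv ?_
  have : q ≠ 0 := (zero_lt_one.trans hq).ne'
  simp only [pFlux]
  field_simp

lemma differentiableAt_and_pFlux_deriv_of_eqOn {p q a b s t x : ℝ} {v : ℝ → ℝ}
    (hpq : p.HolderConjugate q) (hv : ∀ y ∈ Icc s t, v y = -(1 / q) * |a - y| ^ q + b)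
    (hx : x ∈ Ioo s t) :
    DifferentiableAt ℝ v x ∧ pFlux p (deriv v x) = a - x := by
  have hvx : HasDerivAt v (pFlux q (a - x)) x :=
    (hasDerivAt_neg_abs_sub_rpow_div_add hpq.symm.lt a b x).congr_of_eventuallyEq
      (Filter.eventuallyEq_of_mem (Icc_mem_nhds hx.1 hx.2) hv)
  exact ⟨hvx.differentiableAt, by rw [hvx.deriv, hpq.pFlux_pFlux]⟩

lemma continuous_neg_abs_sub_rpow_div_add {q : ℝ} (hq : 1 < q) (a b : ℝ) :
    Continuous fun y : ℝ => -(1 / q) * |a - y| ^ q + b :=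
  continuous_iff_continuousAt.mpr fun x =>
    (hasDerivAt_neg_abs_sub_rpow_div_add hq a b x).continuousAt

lemma continuousOn_Icc_of_eqOn_Icc_of_eqOn_Icc {s t u : ℝ} {v f g : ℝ → ℝ}
    (hst : s ≤ t) (htu : t ≤ u) (hf : Continuous f) (hg : Continuous g)
    (hvf : EqOn v f (Icc s t)) (hvg : EqOn v g (Icc t u)) :
    ContinuousOn v (Icc s u) := by
  rw [← Icc_union_Icc_eq_Icc hst htu]
  exact (hf.continuousOn.congr hvf).union_of_isClosed (hg.continuousOn.congr hvg)
    isClosed_Icc isClosed_Icc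

end

theorem explicit_solution_piecewise_constant_noneven_exponent_general
    (r ζ p₁ p₂ a : ℝ) (hζ : ζ ∈ Set.Ioo (-r) r)
    (hp₁ : 1 < p₁) (hp₂ : 1 < p₂)
    (q₁ q₂ : ℝ) (hq₁ : q₁ = p₁ / (p₁ - 1)) (hq₂ : q₂ = p₂ / (p₂ - 1))
    (ha : -(1 / q₁) * |ζ - a| ^ q₁ + 1 / q₁ * |r + a| ^ q₁
        = -(1 / q₂) * |ζ - a| ^ q₂ + 1 / q₂ * |r - a| ^ q₂)
    (b₁ b₂ : ℝ) (hb₁ : b₁ = 1 / q₁ * |r + a| ^ q₁) (hb₂ : b₂ = 1 / q₂ * |r - a| ^ q₂)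
    (v : ℝ → ℝ)
    (hv₁ : ∀ x ∈ Set.Icc (-r) ζ, v x = -(1 / q₁) * |a - x| ^ q₁ + b₁)
    (hv₂ : ∀ x ∈ Set.Icc ζ r, v x = -(1 / q₂) * |a - x| ^ q₂ + b₂) :
    -- (i) the two formulas agree at ζ; continuity
    ((-(1 / q₁) * |a - ζ| ^ q₁ + b₁ = -(1 / q₂) * |a - ζ| ^ q₂ + b₂) ∧
      ContinuousOn v (Set.Icc (-r) r)) ∧
    -- (ii) zero boundary values
    (v (-r) = 0 ∧ v r = 0) ∧
    -- (iii) differentiability and the flux identities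
    ((∀ x ∈ Set.Ioo (-r) ζ, DifferentiableAt ℝ v x ∧
        |deriv v x| ^ (p₁ - 2) * deriv v x = a - x) ∧
      (∀ x ∈ Set.Ioo ζ r, DifferentiableAt ℝ v x ∧
        |deriv v x| ^ (p₂ - 2) * deriv v x = a - x)) := by
  have hpq₁ : p₁.HolderConjugate q₁ := (holderConjugate_iff_eq_conjExponent hp₁).2 hq₁
  have hpq₂ : p₂.HolderConjugate q₂ := (holderConjugate_iff_eq_conjExponent hp₂).2 hq₂
  refine ⟨⟨?_, ?_⟩, ⟨?_, ?_⟩, fun x hx => ?_, fun x hx => ?_⟩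
  · rw [hb₁, hb₂, abs_sub_comm a ζ]
    exact ha
  · exact continuousOn_Icc_of_eqOn_Icc_of_eqOn_Icc hζ.1.le hζ.2.le
      (continuous_neg_abs_sub_rpow_div_add hpq₁.symm.lt a b₁)
      (continuous_neg_abs_sub_rpow_div_add hpq₂.symm.lt a b₂) hv₁ hv₂
  · rw [hv₁ (-r) ⟨le_rfl, hζ.1.le⟩, hb₁, sub_neg_eq_add, add_comm a r]
    ring
  · rw [hv₂ r ⟨hζ.2.le, le_rfl⟩, hb₂, abs_sub_comm a r]
    ring
  · exact differentiableAt_and_pFlux_deriv_of_eqOn hpq₁ hv₁ hx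
  · exact differentiableAt_and_pFlux_deriv_of_eqOn hpq₂ hv₂ hx

/-- **Explicit solution for a piecewise constant non-even exponent.** Let `r > 0`,
`ζ ∈ (−r, r)`, `p₁, p₂ ∈ (1, ∞)` with conjugates `q₁ = p₁/(p₁−1)`, `q₂ = p₂/(p₂−1)`, let
`a` satisfy the matching condition, set `b₁ := (1/q₁)·|r + a|^{q₁}`,
`b₂ := (1/q₂)·|r − a|^{q₂}`, and define `v(x) := −(1/q₁)·|a − x|^{q₁} + b₁` on `[−r, ζ]`,
`v(x) := −(1/q₂)·|a − x|^{q₂} + b₂` on `[ζ, r]`. Then: (i) the two formulas agree at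
`x = ζ`, so `v` is well defined and continuous on `[−r, r]`; (ii) `v(−r) = v(r) = 0`;
(iii) on `(−r, ζ)` `v` is differentiable with `|v'(x)|^{p₁−2}·v'(x) = a − x`, and on
`(ζ, r)` `v` is differentiable with `|v'(x)|^{p₂−2}·v'(x) = a − x`. -/
theorem explicit_solution_piecewise_constant_noneven_exponent
    (r ζ p₁ p₂ a : ℝ) (hr : 0 < r) (hζ : ζ ∈ Set.Ioo (-r) r)
    (hp₁ : 1 < p₁) (hp₂ : 1 < p₂)
    (q₁ q₂ : ℝ) (hq₁ : q₁ = p₁ / (p₁ - 1)) (hq₂ : q₂ = p₂ / (p₂ - 1))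
    (ha : -(1 / q₁) * |ζ - a| ^ q₁ + 1 / q₁ * |r + a| ^ q₁
        = -(1 / q₂) * |ζ - a| ^ q₂ + 1 / q₂ * |r - a| ^ q₂)
    (b₁ b₂ : ℝ) (hb₁ : b₁ = 1 / q₁ * |r + a| ^ q₁) (hb₂ : b₂ = 1 / q₂ * |r - a| ^ q₂)
    (v : ℝ → ℝ)
    (hv₁ : ∀ x ∈ Set.Icc (-r) ζ, v x = -(1 / q₁) * |a - x| ^ q₁ + b₁)
    (hv₂ : ∀ x ∈ Set.Icc ζ r, v x = -(1 / q₂) * |a - x| ^ q₂ + b₂) :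
    -- (i) the two formulas agree at ζ; continuity
    ((-(1 / q₁) * |a - ζ| ^ q₁ + b₁ = -(1 / q₂) * |a - ζ| ^ q₂ + b₂) ∧
      ContinuousOn v (Set.Icc (-r) r)) ∧
    -- (ii) zero boundary values
    (v (-r) = 0 ∧ v r = 0) ∧
    -- (iii) differentiability and the flux identities
    ((∀ x ∈ Set.Ioo (-r) ζ, DifferentiableAt ℝ v x ∧
        |deriv v x| ^ (p₁ - 2) * deriv v x = a - x) ∧
      (∀ x ∈ Set.Ioo ζ r, DifferentiableAt ℝ v x ∧
        |deriv v x| ^ (p₂ - 2) * deriv v x = a - x)) :=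
  explicit_solution_piecewise_constant_noneven_exponent_general r ζ p₁ p₂ a hζ hp₁ hp₂ q₁ q₂ hq₁ hq₂
    ha b₁ b₂ hb₁ hb₂ v hv₁ hv₂
end
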